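/- Let (P, γ, I, ⋆) be a braided ABQR operad with a coherent unit action (α, β) satisfying α = β. Then there is a basis {p₁,…,p_n} of P₂ with ⋆ = Σᵢ pᵢ such that the relation space Λ is contained in the span of {(p₁⊗⋆, p₁⊗⋆) + (⋆⊗p₁, ⋆⊗p₁) − (p₁⊗p₁, p₁⊗p₁)} ∪ {(pᵢ⊗pⱼ, 0), (0, pᵢ⊗pⱼ) : 2 ≤ i,j ≤ n}. -/

import Mathlib

open TensorProduct

variable (k : Type*) [Field k] [CharZero k]
variable (V : Type*) [AddCommGroup V] [Module k V]

/-- `a ⊗ b ↦ f(a) • b`. -/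
noncomputable def contrL (f : V →ₗ[k] k) : V ⊗[k] V →ₗ[k] V :=
  TensorProduct.lift ((LinearMap.lsmul k V) ∘ₗ f)

/-- `a ⊗ b ↦ f(b) • a`. -/
noncomputable def contrR (f : V →ₗ[k] k) : V ⊗[k] V →ₗ[k] V :=
  TensorProduct.lift ((LinearMap.lsmul k V) ∘ₗ f).flip

/-- `a ⊗ b ↦ f(a) * g(b)`. -/
noncomputable def contrS (f g : V →ₗ[k] k) : V ⊗[k] V →ₗ[k] k :=
  (TensorProduct.lid k k).toLinearMap ∘ₗ TensorProduct.map f g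

/-- The five coherence equations (C1)–(C5) of Theorem 4.1 for a relation pair
`(Σᵢ aᵢ ⊗ bᵢ, Σⱼ cⱼ ⊗ dⱼ) ∈ P₂^{⊗2} ⊕ P₂^{⊗2}`, expressed for the unit-action
maps `α, β : P₂ → k` and the associative element `⋆ = st`:
(C1) `Σ β(aᵢ)bᵢ = Σ β(cⱼ)dⱼ`; (C2) `Σ α(aᵢ)bᵢ = Σ β(dⱼ)cⱼ`;
(C3) `Σ α(bᵢ)aᵢ = Σ α(dⱼ)cⱼ`; (C4) `Σ β(bᵢ)aᵢ = (Σ β(cⱼ)β(dⱼ)) ⋆`;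
(C5) `(Σ α(aᵢ)α(bᵢ)) ⋆ = Σ α(cⱼ)dⱼ`. -/
noncomputable def Coherent (α β : V →ₗ[k] k) (st : V)
    (x : (V ⊗[k] V) × (V ⊗[k] V)) : Prop :=
  contrL k V β x.1 = contrL k V β x.2 ∧
  contrL k V α x.1 = contrR k V β x.2 ∧
  contrR k V α x.1 = contrR k V α x.2 ∧
  contrR k V β x.1 = contrS k V β β x.2 • st ∧
  contrS k V α α x.1 • st = contrL k V α x.2

/-- The spanning set `λ''_{n,coh}` (Eq. (4.3)) of admissible quadratic relations
for a coherent unit action with `α = β`, relative to a basis `p₁,…,pₙ` of `P₂`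
with `⋆ = Σᵢ pᵢ` (indices `0`-based: `p₁ = p 0`):
`(p₁⊗⋆, p₁⊗⋆) + (⋆⊗p₁, ⋆⊗p₁) − (p₁⊗p₁, p₁⊗p₁)`;
`(pᵢ⊗pⱼ, 0)`, `(0, pᵢ⊗pⱼ)` for `2 ≤ i, j ≤ n`. -/
def classSetEq {n : ℕ} (hn : 1 ≤ n) (st : V) (p : Fin n → V) :
    Set ((V ⊗[k] V) × (V ⊗[k] V)) :=
  {x | x = (p ⟨0, by omega⟩ ⊗ₜ[k] st, p ⟨0, by omega⟩ ⊗ₜ[k] st)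
         + (st ⊗ₜ[k] p ⟨0, by omega⟩, st ⊗ₜ[k] p ⟨0, by omega⟩)
         - (p ⟨0, by omega⟩ ⊗ₜ[k] p ⟨0, by omega⟩,
            p ⟨0, by omega⟩ ⊗ₜ[k] p ⟨0, by omega⟩)
    ∨ (∃ i j : Fin n, 1 ≤ (i : ℕ) ∧ 1 ≤ (j : ℕ) ∧
        (x = (p i ⊗ₜ[k] p j, 0) ∨ x = (0, p i ⊗ₜ[k] p j)))}

/-! Pick a basis `p` of `P₂` with `p.coord 0 = α` and `∑ pᵢ = ⋆`. For `α = β`, equations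
(C1), (C2), (C3), (C5) force both contractions `Σ α(aᵢ)bᵢ` and `Σ α(bᵢ)aᵢ` of each side of a
relation to equal `c ⋆`, with `c = Σ α(aᵢ)α(bᵢ)`. In the basis `pᵢ ⊗ pⱼ` these contractions are
row and column `0` of the coefficient matrix, so each side is `c` times the hook tensor
`p₀ ⊗ ⋆ + ⋆ ⊗ p₀ - p₀ ⊗ p₀` plus a combination of the `pᵢ ⊗ pⱼ` with `i, j ≠ 0`. -/

section

open Set Submodule

variable {k : Type*} [Field k] {V : Type*} [AddCommGroup V] [Module k V]

@[simp]
lemma contrL_tmul (f : V →ₗ[k] k) (a b : V) : contrL k V f (a ⊗ₜ[k] b) = f a • b := by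
  simp [contrL]

@[simp]
lemma contrR_tmul (f : V →ₗ[k] k) (a b : V) : contrR k V f (a ⊗ₜ[k] b) = f b • a := by
  simp [contrR]

lemma Coherent.contr_eq_smul {α : V →ₗ[k] k} {st : V} {x : (V ⊗[k] V) × (V ⊗[k] V)}
    (h : Coherent k V α α st x) :
    (contrL k V α x.1 = contrS k V α α x.1 • st ∧ contrR k V α x.1 = contrS k V α α x.1 • st) ∧
      (contrL k V α x.2 = contrS k V α α x.1 • st ∧ contrR k V α x.2 = contrS k V α α x.1 • st) := by
  obtain ⟨h₁, h₂, h₃, -, h₅⟩ := h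
  have hL₂ := h₅.symm
  have hL₁ := h₁.trans hL₂
  have hR₂ := h₂.symm.trans hL₁
  exact ⟨⟨hL₁, h₃.trans hR₂⟩, hL₂, hR₂⟩

/-- With `s = ∑ pᵢ`, the coordinates of `hookTensor p₀ s` in the basis `pᵢ ⊗ pⱼ` are `1` on
row and column `0` and `0` elsewhere. -/
noncomputable def hookTensor (p₀ s : V) : V ⊗[k] V :=
  p₀ ⊗ₜ s + s ⊗ₜ p₀ - p₀ ⊗ₜ p₀

lemma contrL_hookTensor {α : V →ₗ[k] k} {p₀ s : V} (hp₀ : α p₀ = 1) (hs : α s = 1) :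
    contrL k V α (hookTensor p₀ s) = s := by
  simp [hookTensor, hp₀, hs]

lemma contrR_hookTensor {α : V →ₗ[k] k} {p₀ s : V} (hp₀ : α p₀ = 1) (hs : α s = 1) :
    contrR k V α (hookTensor p₀ s) = s := by
  simp [hookTensor, hp₀, hs]

lemma Module.Basis.repr_contrL_coord {ι : Type*} (b : Module.Basis ι k V) (i j : ι)
    (t : V ⊗[k] V) : b.repr (contrL k V (b.coord i) t) j = (b.tensorProduct b).repr t (i, j) := by
  induction t using TensorProduct.induction_on with
  | zero => simp
  | tmul x y => simp [Module.Basis.tensorProduct_repr_tmul_apply, mul_comm]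
  | add s t hs ht => simp [hs, ht]

lemma Module.Basis.repr_contrR_coord {ι : Type*} (b : Module.Basis ι k V) (i j : ι)
    (t : V ⊗[k] V) : b.repr (contrR k V (b.coord j) t) i = (b.tensorProduct b).repr t (i, j) := by
  induction t using TensorProduct.induction_on with
  | zero => simp
  | tmul x y => simp [Module.Basis.tensorProduct_repr_tmul_apply]
  | add s t hs ht => simp [hs, ht]

lemma Module.Basis.mem_span_image2_tmul_of_contr_eq_zero {ι : Type*} (b : Module.Basis ι k V)
    (i₀ : ι) {w : V ⊗[k] V} (hL : contrL k V (b.coord i₀) w = 0)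
    (hR : contrR k V (b.coord i₀) w = 0) :
    w ∈ span k (image2 (fun i j => b i ⊗ₜ[k] b j) {i₀}ᶜ {i₀}ᶜ) := by
  have himage : image2 (fun i j => b i ⊗ₜ[k] b j) {i₀}ᶜ {i₀}ᶜ
      = b.tensorProduct b '' ({i₀}ᶜ ×ˢ {i₀}ᶜ) := by
    simp [← image_uncurry_prod, Function.uncurry_def, Module.Basis.tensorProduct_apply']
  rw [himage, Module.Basis.mem_span_image]
  rintro ⟨i, j⟩ hij
  rw [Finset.mem_coe, Finsupp.mem_support_iff] at hij
  refine ⟨fun (hi : i = i₀) => hij ?_, fun (hj : j = i₀) => hij ?_⟩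
  · rw [hi, ← b.repr_contrL_coord, hL, map_zero, Finsupp.zero_apply]
  · rw [hj, ← b.repr_contrR_coord, hR, map_zero, Finsupp.zero_apply]

lemma mk_mem_span_classSetEq {n : ℕ} (hn : 1 ≤ n) (st : V) (p : Fin n → V)
    {w w' : V ⊗[k] V}
    (hw : w ∈ span k (image2 (fun i j => p i ⊗ₜ[k] p j) {⟨0, hn⟩}ᶜ {⟨0, hn⟩}ᶜ))
    (hw' : w' ∈ span k (image2 (fun i j => p i ⊗ₜ[k] p j) {⟨0, hn⟩}ᶜ {⟨0, hn⟩}ᶜ)) :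
    (w, w') ∈ span k (classSetEq k V hn st p) := by
  have hmap : ∀ f : V ⊗[k] V →ₗ[k] (V ⊗[k] V) × (V ⊗[k] V),
      (∀ t : V ⊗[k] V, f t = (t, 0) ∨ f t = (0, t)) →
      span k (image2 (fun i j => p i ⊗ₜ[k] p j) {⟨0, hn⟩}ᶜ {⟨0, hn⟩}ᶜ)
        ≤ (span k (classSetEq k V hn st p)).comap f := by
    refine fun f hf => span_le.mpr ?_
    rintro _ ⟨i, hi, j, hj, rfl⟩
    have pos : ∀ l : Fin n, l ≠ ⟨0, hn⟩ → 1 ≤ (l : ℕ) :=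
      fun l hl => Nat.one_le_iff_ne_zero.mpr fun h => hl (Fin.ext h)
    exact subset_span (Or.inr ⟨i, j, pos i hi, pos j hj, hf _⟩)
  rw [← Prod.fst_add_snd (w, w'), ← LinearMap.inl_apply (R := k), ← LinearMap.inr_apply (R := k)]
  exact add_mem (hmap _ (fun _ => Or.inl rfl) hw) (hmap _ (fun _ => Or.inr rfl) hw')

/-- Complete a basis `q` of `ker α` by `p₀ = s - ∑ qᵢ`. -/
lemma exists_basis_coord_zero_eq_and_sum_eq {m : ℕ} (hdim : Module.finrank k V = m + 1)
    {α : V →ₗ[k] k} {s : V} (hs : α s = 1) :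
    ∃ p : Module.Basis (Fin (m + 1)) k V, p.coord 0 = α ∧ ∑ i, p i = s := by
  have : FiniteDimensional k V := Module.finite_of_finrank_eq_succ hdim
  have hα : α ≠ 0 := fun h => by simp [h] at hs
  have hker : Module.finrank k (LinearMap.ker α) = m := by
    have := Module.Dual.finrank_ker_add_one_of_ne_zero hα
    omega
  let q := Module.finBasisOfFinrankEq k (LinearMap.ker α) hker
  have hq : ∀ i, α (q i) = 0 := fun i => (q i).2
  have hp₀ : α (s - ∑ i, (q i : V)) = 1 := by simp [hq, hs]
  let p : Module.Basis (Fin (m + 1)) k V := Module.Basis.mkFinCons (s - ∑ i, (q i : V)) q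
    (fun c x hx hcx => by simpa [hp₀, LinearMap.mem_ker.mp hx] using congr_arg α hcx)
    (fun z => ⟨-α z, by simp [LinearMap.mem_ker, hp₀]⟩)
  have hp : ⇑p = Fin.cons (s - ∑ i, (q i : V)) (fun i => (q i : V)) :=
    Module.Basis.coe_mkFinCons _ _ _ _
  refine ⟨p, p.ext fun i => ?_, by simp [hp, Fin.sum_univ_succ]⟩
  rw [Module.Basis.coord_apply, Module.Basis.repr_self]
  cases i using Fin.cases <;> simp [hp, hp₀, hq, Fin.succ_ne_zero]

end

theorem classification_coherent_eq_general {k : Type*} [Field k]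
    {V : Type*} [AddCommGroup V] [Module k V]
    (n : ℕ) (hn : 1 ≤ n) (hdim : Module.finrank k V = n) (st : V)
    (Λ : Submodule k ((V ⊗[k] V) × (V ⊗[k] V)))
    (α : V →ₗ[k] k) (hα : α st = 1)
    (hcoh : ∀ x ∈ Λ, Coherent k V α α st x) :
    ∃ p : Module.Basis (Fin n) k V, st = ∑ i, p i ∧
      Λ ≤ Submodule.span k (classSetEq k V hn st p) := by
  obtain ⟨m, rfl⟩ : ∃ m, n = m + 1 := ⟨n - 1, by omega⟩
  obtain ⟨p, rfl, hst⟩ := exists_basis_coord_zero_eq_and_sum_eq hdim hα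
  refine ⟨p, hst.symm, fun x hx => ?_⟩
  obtain ⟨⟨hL₁, hR₁⟩, hL₂, hR₂⟩ := (hcoh x hx).contr_eq_smul
  set c := contrS k V (p.coord 0) (p.coord 0) x.1
  set h : V ⊗[k] V := hookTensor (p 0) st
  have hp₀ : p.coord 0 (p 0) = 1 := by simp
  have hhL : contrL k V (p.coord 0) h = st := contrL_hookTensor hp₀ hα
  have hhR : contrR k V (p.coord 0) h = st := contrR_hookTensor hp₀ hα
  have hx : x = c • (h, h) + (x.1 - c • h, x.2 - c • h) := by ext <;> simp
  rw [hx]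
  refine add_mem (Submodule.smul_mem _ _ (Submodule.subset_span (Or.inl rfl)))
    (mk_mem_span_classSetEq hn st p ?_ ?_)
  · exact p.mem_span_image2_tmul_of_contr_eq_zero 0 (by simp [hL₁, hhL]) (by simp [hR₁, hhR])
  · exact p.mem_span_image2_tmul_of_contr_eq_zero 0 (by simp [hL₂, hhL]) (by simp [hR₂, hhR])

/-- classification, case `α = β`. Let `(P, γ, I, ⋆)` be a
braided ABQR operad with a coherent unit action `(α, β)` satisfying `α = β`
(coherence expressed via the equations (C1)–(C5), predicate `Coherent`).
Then there is a basis `{pᵢ}` of `P₂` with `⋆ = Σᵢ pᵢ` such that the relation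
space `Λ` is contained in the span of the set `classSetEq`. -/
theorem classification_coherent_eq {k : Type*} [Field k] [CharZero k]
    {V : Type*} [AddCommGroup V] [Module k V] [FiniteDimensional k V]
    (n : ℕ) (hn : 1 ≤ n) (hdim : Module.finrank k V = n) (st : V)
    (Λ : Submodule k ((V ⊗[k] V) × (V ⊗[k] V)))
    (α : V →ₗ[k] k) (hα : α st = 1)
    (hcoh : ∀ x ∈ Λ, Coherent k V α α st x) :
    ∃ p : Module.Basis (Fin n) k V, st = ∑ i, p i ∧
      Λ ≤ Submodule.span k (classSetEq k V hn st p) :=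
  classification_coherent_eq_general n hn hdim st Λ α hα hcoh
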